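/- Let β₁, β₂, β₃ ∈ ℝ³ with ‖β₁‖ < 1, ‖β₂‖ < 1, ‖β₃‖ < 1, and suppose D is a real 3×3 matrix such that B(β₁) * B(β₂) = B(β₁ ⋆ β₂) * R(D) (the Thomas rotation of the pair (β₁, β₂)). Then associativity of relativistic velocity composition fails exactly by the Thomas rotation: β₁ ⋆ (β₂ ⋆ β₃) = (β₁ ⋆ β₂) ⋆ (D · β₃). -/

import Mathlib

open Matrix

noncomputable section

/-- Euclidean dot product on `ℝ³`. -/
def dot3 (u v : Fin 3 → ℝ) : ℝ := ∑ i, u i * v i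

/-- The Lorentz factor `γ(β) = 1/√(1 - ‖β‖²)`. -/
def gam (β : Fin 3 → ℝ) : ℝ := 1 / Real.sqrt (1 - dot3 β β)

/-- The Lorentz boost with velocity `β`, as a 4×4 matrix over `Unit ⊕ Fin 3`
(the `Unit` index is the time coordinate): time-time entry `γ`, time-space and
space-time entries `γ βᵢ`, space-space entries `δᵢⱼ + (γ²/(1+γ)) βᵢ βⱼ`. -/
def boost (β : Fin 3 → ℝ) : Matrix (Unit ⊕ Fin 3) (Unit ⊕ Fin 3) ℝ :=
  Matrix.fromBlocks (Matrix.of fun _ _ => gam β)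
    (Matrix.of fun _ j => gam β * β j)
    (Matrix.of fun i _ => gam β * β i)
    ((1 : Matrix (Fin 3) (Fin 3) ℝ) + ((gam β) ^ 2 / (1 + gam β)) • Matrix.vecMulVec β β)

/-- The spatial rotation `R(D) = diag(1, D)` as a 4×4 matrix. -/
def rot (D : Matrix (Fin 3) (Fin 3) ℝ) : Matrix (Unit ⊕ Fin 3) (Unit ⊕ Fin 3) ℝ :=
  Matrix.fromBlocks 1 0 0 D

/-- Relativistic composition of velocities:
`β₁ ⋆ β₂ = [β₁ + γ₁⁻¹ β₂ + (γ₁/(1+γ₁)) (β₁·β₂) β₁] / (1 + β₁·β₂)`. -/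
def vcomp (β₁ β₂ : Fin 3 → ℝ) : Fin 3 → ℝ :=
  (1 / (1 + dot3 β₁ β₂)) •
    (β₁ + (gam β₁)⁻¹ • β₂ + (gam β₁ / (1 + gam β₁)) • dot3 β₁ β₂ • β₁)

end

/-! The boost `B(β)` maps the scaled four-velocity `c (1, v)` to `c γ(β) (1 + β·v) (1, β ⋆ v)`.
Applying both sides of `B(β₁) B(β₂) = B(β₁ ⋆ β₂) R(D)` to `(1, β₃)` therefore gives a positive
multiple of `(1, β₁ ⋆ (β₂ ⋆ β₃))` on the left and `B(β₁ ⋆ β₂) (1, D β₃)` on the right. Comparing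
time components shows `1 + (β₁ ⋆ β₂)·(D β₃) ≠ 0`, so the right side is a multiple of
`(1, (β₁ ⋆ β₂) ⋆ D β₃)`, and the spatial components give the claim. The identity
`1 - |β ⋆ v|² = (1 - |β|²)(1 - |v|²) / (1 + β·v)²` keeps all intermediate velocities subluminal. -/

lemma dot3_self_nonneg (u : Fin 3 → ℝ) : 0 ≤ dot3 u u :=
  Finset.sum_nonneg fun _ _ => mul_self_nonneg _

lemma dot3_sq_le (u v : Fin 3 → ℝ) : dot3 u v ^ 2 ≤ dot3 u u * dot3 v v := by
  simpa [dot3, sq] using Finset.sum_mul_sq_le_sq_mul_sq Finset.univ u v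

lemma one_add_dot3_pos {u v : Fin 3 → ℝ} (hu : dot3 u u < 1) (hv : dot3 v v < 1) :
    0 < 1 + dot3 u v := by
  nlinarith [dot3_sq_le u v, dot3_self_nonneg u, dot3_self_nonneg v]

lemma gam_pos {β : Fin 3 → ℝ} (h : dot3 β β < 1) : 0 < gam β :=
  one_div_pos.2 (Real.sqrt_pos.2 (by linarith))

lemma gam_sq_mul {β : Fin 3 → ℝ} (h : dot3 β β < 1) : gam β ^ 2 * (1 - dot3 β β) = 1 := by
  have h0 : 0 < 1 - dot3 β β := by linarith
  rw [gam, div_pow, one_pow, Real.sq_sqrt h0.le, one_div_mul_cancel h0.ne']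

lemma vcomp_eq_smul_add_smul (β v : Fin 3 → ℝ) :
    vcomp β v = ((1 + gam β / (1 + gam β) * dot3 β v) / (1 + dot3 β v)) • β
      + ((gam β)⁻¹ / (1 + dot3 β v)) • v := by
  ext i
  simp only [vcomp, Pi.smul_apply, Pi.add_apply, smul_eq_mul]
  ring

lemma dot3_smul_add_smul_self (r s : ℝ) (u v : Fin 3 → ℝ) :
    dot3 (r • u + s • v) (r • u + s • v)
      = r ^ 2 * dot3 u u + 2 * r * s * dot3 u v + s ^ 2 * dot3 v v := by
  simp only [dot3, Fin.sum_univ_three, Pi.add_apply, Pi.smul_apply, smul_eq_mul]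
  ring

lemma one_sub_dot3_vcomp_self {β v : Fin 3 → ℝ} (hβ : dot3 β β < 1) (hv : 1 + dot3 β v ≠ 0) :
    1 - dot3 (vcomp β v) (vcomp β v) =
      (1 - dot3 β β) * (1 - dot3 v v) / (1 + dot3 β v) ^ 2 := by
  have hγ := gam_pos hβ
  have hββ : dot3 β β = 1 - (gam β ^ 2)⁻¹ := by
    field_simp; linarith [gam_sq_mul hβ]
  rw [vcomp_eq_smul_add_smul, dot3_smul_add_smul_self, hββ]
  field_simp
  ring

lemma dot3_vcomp_self_lt_one {β v : Fin 3 → ℝ} (hβ : dot3 β β < 1) (hv : dot3 v v < 1) :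
    dot3 (vcomp β v) (vcomp β v) < 1 := by
  have hb := one_add_dot3_pos hβ hv
  have hgap : 0 < (1 - dot3 β β) * (1 - dot3 v v) / (1 + dot3 β v) ^ 2 := by
    apply div_pos <;> nlinarith
  linarith [one_sub_dot3_vcomp_self hβ hb.ne']

def fourVel (c : ℝ) (v : Fin 3 → ℝ) : Unit ⊕ Fin 3 → ℝ := Sum.elim (fun _ => c) (c • v)

lemma boost_mulVec_fourVel (β : Fin 3 → ℝ) (c : ℝ) (v : Fin 3 → ℝ) :
    boost β *ᵥ fourVel c v = Sum.elim (fun _ => c * gam β * (1 + dot3 β v))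
      (c • (gam β • β + v + (gam β ^ 2 / (1 + gam β) * dot3 β v) • β)) := by
  rw [boost, fourVel, fromBlocks_mulVec, Sum.elim_comp_inl, Sum.elim_comp_inr, add_mulVec,
    one_mulVec, smul_mulVec, vecMulVec_mulVec]
  congr 1 <;> ext <;> simp [mulVec, dotProduct, dot3, Fin.sum_univ_three] <;> ring

lemma boost_mulVec_fourVel_eq_fourVel_vcomp {β v : Fin 3 → ℝ} (hβ : dot3 β β < 1)
    (hv : 1 + dot3 β v ≠ 0) (c : ℝ) :
    boost β *ᵥ fourVel c v = fourVel (c * gam β * (1 + dot3 β v)) (vcomp β v) := by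
  have hγ := gam_pos hβ
  rw [boost_mulVec_fourVel, fourVel]
  congr 1
  ext i
  simp only [vcomp, Pi.smul_apply, Pi.add_apply, smul_eq_mul]
  field_simp

lemma rot_mulVec_fourVel (D : Matrix (Fin 3) (Fin 3) ℝ) (c : ℝ) (v : Fin 3 → ℝ) :
    rot D *ᵥ fourVel c v = fourVel c (D *ᵥ v) := by
  rw [rot, fourVel, fromBlocks_mulVec, fourVel]
  simp [mulVec_smul]

lemma fourVel_inj {c : ℝ} (hc : c ≠ 0) {v w : Fin 3 → ℝ} :
    fourVel c v = fourVel c w ↔ v = w := by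
  refine ⟨fun h => ?_, congrArg _⟩
  ext i
  simpa [fourVel, hc] using congrFun h (Sum.inr i)

lemma eq_vcomp_of_fourVel_eq_boost_mulVec {β v w : Fin 3 → ℝ} (hβ : dot3 β β < 1) {c : ℝ}
    (hc : c ≠ 0) (h : fourVel c v = boost β *ᵥ fourVel 1 w) : v = vcomp β w := by
  have htime : c = gam β * (1 + dot3 β w) := by
    have := congrFun (h.trans (boost_mulVec_fourVel β 1 w)) (Sum.inl ())
    simpa [fourVel] using this
  have hw : 1 + dot3 β w ≠ 0 := by
    rintro hw
    exact hc (by simpa [hw] using htime)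
  rwa [boost_mulVec_fourVel_eq_fourVel_vcomp hβ hw, one_mul, ← htime, fourVel_inj hc] at h

open Matrix in
/-- Associativity of relativistic velocity composition fails exactly by the
Thomas rotation: `β₁ ⋆ (β₂ ⋆ β₃) = (β₁ ⋆ β₂) ⋆ (D · β₃)`. -/
theorem vcomp_assoc_thomas (β₁ β₂ β₃ : Fin 3 → ℝ)
    (h₁ : dot3 β₁ β₁ < 1) (h₂ : dot3 β₂ β₂ < 1) (h₃ : dot3 β₃ β₃ < 1)
    (D : Matrix (Fin 3) (Fin 3) ℝ)
    (hD : boost β₁ * boost β₂ = boost (vcomp β₁ β₂) * rot D) :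
    vcomp β₁ (vcomp β₂ β₃) = vcomp (vcomp β₁ β₂) (D *ᵥ β₃) := by
  have h₂₃ := dot3_vcomp_self_lt_one h₂ h₃
  have hb₂₃ := one_add_dot3_pos h₂ h₃
  have hb₁ := one_add_dot3_pos h₁ h₂₃
  have hc : 0 < 1 * gam β₂ * (1 + dot3 β₂ β₃) * gam β₁ * (1 + dot3 β₁ (vcomp β₂ β₃)) := by
    have hγ₁ := gam_pos h₁
    have hγ₂ := gam_pos h₂
    positivity
  refine eq_vcomp_of_fourVel_eq_boost_mulVec (dot3_vcomp_self_lt_one h₁ h₂) hc.ne' ?_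
  rw [← rot_mulVec_fourVel, mulVec_mulVec, ← hD, ← mulVec_mulVec,
    boost_mulVec_fourVel_eq_fourVel_vcomp h₂ hb₂₃.ne',
    boost_mulVec_fourVel_eq_fourVel_vcomp h₁ hb₁.ne']
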